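/- Under the hypotheses of the per-mode differential inequality—M symmetric positive definite N×N, λ > 0, κ > 0, AᵀM + MA + EᵀWE + λM ⪯ 0 with W symmetric with nonnegative entries, ω : ℝ → ℝ^N having derivative A ω(t) + v₁ + v₂ + c at t, E ω(t) ≥ 0 entrywise, ω(t) ≠ 0—assume in addition that V(ω(t)) > (2/(λκ))(√(v₁ᵀMv₁) + √(v₂ᵀMv₂) + √(cᵀMc)), where V(ω) = (1/κ)√(ωᵀMω). Then the derivative of t ↦ V(ω(t)) at t is strictly negative. (The paper's claim that the simulation function strictly decreases whenever it exceeds the class-K threshold determined by the transformed input, the abstraction state, and the disturbance.) -/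

import Mathlib

/-!
Write `x = ω t` and `‖y‖_M = √(yᵀ M y)`. Since `M` is symmetric, the derivative of `V ∘ ω` at `t`
is `ω̇ᵀ M x / (κ ‖x‖_M)`, so only the sign of `ω̇ᵀ M x` matters. Testing the LMI against `x`
and dropping the sector term `(E x)ᵀ W (E x) ≥ 0` gives `2 (A x)ᵀ M x ≤ -λ ‖x‖_M²`, while
Cauchy–Schwarz for the form `M` bounds each input term `vᵀ M x` by `‖v‖_M ‖x‖_M`. Hence
`ω̇ᵀ M x ≤ ‖x‖_M (‖v₁‖_M + ‖v₂‖_M + ‖c‖_M - λ ‖x‖_M / 2)`, which is negative exactly above the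
threshold `V(x) > (2/(λκ)) (‖v₁‖_M + ‖v₂‖_M + ‖c‖_M)`.
-/

open Matrix

namespace Matrix

variable {m n : Type*} [Fintype m] [Fintype n]

lemma IsSymm.dotProduct_mulVec_comm {M : Matrix n n ℝ} (hM : M.IsSymm) (v w : n → ℝ) :
    v ⬝ᵥ M *ᵥ w = w ⬝ᵥ M *ᵥ v := by
  rw [dotProduct_mulVec, ← mulVec_transpose, hM.eq, dotProduct_comm]

lemma PosSemidef.dotProduct_mulVec_le_sqrt_mul_sqrt {M : Matrix n n ℝ} (hM : M.PosSemidef)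
    (v w : n → ℝ) :
    v ⬝ᵥ M *ᵥ w ≤ √(v ⬝ᵥ M *ᵥ v) * √(w ⬝ᵥ M *ᵥ w) := by
  let := M.toSeminormedAddCommGroup hM
  let := M.toInnerProductSpace hM
  have h := real_inner_le_norm v w
  rw [norm_eq_sqrt_re_inner (𝕜 := ℝ), norm_eq_sqrt_re_inner (𝕜 := ℝ)] at h
  change (M *ᵥ w) ⬝ᵥ v ≤ √((M *ᵥ v) ⬝ᵥ v) * √((M *ᵥ w) ⬝ᵥ w) at h
  simpa only [dotProduct_comm (M *ᵥ _)] using h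

lemma dotProduct_mulVec_nonneg_of_nonneg {W : Matrix m m ℝ} (hW : ∀ i j, 0 ≤ W i j)
    {u : m → ℝ} (hu : ∀ i, 0 ≤ u i) : 0 ≤ u ⬝ᵥ W *ᵥ u :=
  dotProduct_nonneg_of_nonneg hu fun i =>
    Finset.sum_nonneg fun j _ => mul_nonneg (hW i j) (hu j)

lemma PosSemidef.add_dotProduct_mulVec_le {M : Matrix n n ℝ} (hM : M.PosSemidef)
    (y v x : n → ℝ) :
    (y + v) ⬝ᵥ M *ᵥ x ≤ y ⬝ᵥ M *ᵥ x + √(v ⬝ᵥ M *ᵥ v) * √(x ⬝ᵥ M *ᵥ x) := by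
  rw [add_dotProduct]
  linarith [hM.dotProduct_mulVec_le_sqrt_mul_sqrt v x]

lemma dissipation_le_of_lmi {A M : Matrix n n ℝ} {E : Matrix m n ℝ} {W : Matrix m m ℝ}
    {lam : ℝ} (hW : ∀ i j, 0 ≤ W i j)
    (hLMI : (-(Aᵀ * M + M * A + Eᵀ * W * E + lam • M)).PosSemidef)
    {x : n → ℝ} (hE : ∀ i, 0 ≤ (E *ᵥ x) i) :
    (A *ᵥ x) ⬝ᵥ M *ᵥ x + x ⬝ᵥ M *ᵥ (A *ᵥ x) + lam * (x ⬝ᵥ M *ᵥ x) ≤ 0 := by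
  have hLx := hLMI.dotProduct_mulVec_nonneg x
  have hsector := dotProduct_mulVec_nonneg_of_nonneg hW hE
  simp only [star_trivial, neg_mulVec, dotProduct_neg, add_mulVec, dotProduct_add, smul_mulVec,
    dotProduct_smul, smul_eq_mul, ← mulVec_mulVec, dotProduct_mulVec x Aᵀ,
    dotProduct_mulVec x Eᵀ, vecMul_transpose] at hLx
  linarith

end Matrix

section Derivatives

variable {n : Type*} [Fintype n] {f g : ℝ → n → ℝ} {f' g' : n → ℝ} {t : ℝ}

lemma HasDerivAt.dotProduct (hf : HasDerivAt f f' t) (hg : HasDerivAt g g' t) :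
    HasDerivAt (fun s => f s ⬝ᵥ g s) (f' ⬝ᵥ g t + f t ⬝ᵥ g') t := by
  rw [_root_.dotProduct, _root_.dotProduct, ← Finset.sum_add_distrib]
  exact HasDerivAt.fun_sum fun i _ => (hasDerivAt_pi.mp hf i).fun_mul (hasDerivAt_pi.mp hg i)

lemma HasDerivAt.mulVec (M : Matrix n n ℝ) (hf : HasDerivAt f f' t) :
    HasDerivAt (fun s => M *ᵥ f s) (M *ᵥ f') t :=
  (LinearMap.toContinuousLinearMap (mulVecLin M)).hasFDerivAt.comp_hasDerivAt t hf

lemma HasDerivAt.sqrt_dotProduct_mulVec {M : Matrix n n ℝ} (hM : M.IsSymm)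
    (hf : HasDerivAt f f' t) (hpos : 0 < f t ⬝ᵥ M *ᵥ f t) :
    HasDerivAt (fun s => √(f s ⬝ᵥ M *ᵥ f s)) (f' ⬝ᵥ M *ᵥ f t / √(f t ⬝ᵥ M *ᵥ f t)) t := by
  have h := (hf.dotProduct (hf.mulVec M)).sqrt hpos.ne'
  rwa [hM.dotProduct_mulVec_comm (f t) f', ← two_mul, mul_div_mul_left _ _ two_ne_zero] at h

end Derivatives

theorem stmt_11_general {N b : ℕ} (M : Matrix (Fin N) (Fin N) ℝ) (hM : M.PosDef)
    (lam κ : ℝ) (hlam : 0 < lam) (hκ : 0 < κ)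
    (A : Matrix (Fin N) (Fin N) ℝ) (E : Matrix (Fin b) (Fin N) ℝ)
    (W : Matrix (Fin b) (Fin b) ℝ) (hWpos : ∀ i j, 0 ≤ W i j)
    (hLMI : (-(Aᵀ * M + M * A + Eᵀ * W * E + lam • M)).PosSemidef)
    (ω : ℝ → Fin N → ℝ) (v₁ v₂ c : Fin N → ℝ) (t : ℝ)
    (hω : HasDerivAt ω (A *ᵥ ω t + v₁ + v₂ + c) t)
    (hE : ∀ i, 0 ≤ (E *ᵥ ω t) i) (hne : ω t ≠ 0)
    (hV : (2 / (lam * κ)) * (Real.sqrt (v₁ ⬝ᵥ M *ᵥ v₁) + Real.sqrt (v₂ ⬝ᵥ M *ᵥ v₂)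
        + Real.sqrt (c ⬝ᵥ M *ᵥ c))
      < (1 / κ) * Real.sqrt (ω t ⬝ᵥ M *ᵥ ω t)) :
    ∃ D : ℝ, HasDerivAt (fun s => (1 / κ) * Real.sqrt (ω s ⬝ᵥ M *ᵥ ω s)) D t ∧ D < 0 := by
  have hMsymm : M.IsSymm := isHermitian_iff_isSymm.mp hM.isHermitian
  have hMpsd := hM.posSemidef
  set x := ω t
  set r := √(x ⬝ᵥ M *ᵥ x)
  set S := √(v₁ ⬝ᵥ M *ᵥ v₁) + √(v₂ ⬝ᵥ M *ᵥ v₂) + √(c ⬝ᵥ M *ᵥ c)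
  have hq : 0 < x ⬝ᵥ M *ᵥ x := by simpa using hM.dotProduct_mulVec_pos hne
  have hr : 0 < r := Real.sqrt_pos.mpr hq
  refine ⟨1 / κ * ((A *ᵥ x + v₁ + v₂ + c) ⬝ᵥ M *ᵥ x / r),
    (hω.sqrt_dotProduct_mulVec hMsymm hq).const_mul _, ?_⟩
  have hdissip := dissipation_le_of_lmi hWpos hLMI hE
  rw [hMsymm.dotProduct_mulVec_comm x] at hdissip
  have hinputs : (A *ᵥ x + v₁ + v₂ + c) ⬝ᵥ M *ᵥ x ≤ (A *ᵥ x) ⬝ᵥ M *ᵥ x + S * r := by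
    have h₁ := hMpsd.add_dotProduct_mulVec_le (A *ᵥ x) v₁ x
    have h₂ := hMpsd.add_dotProduct_mulVec_le (A *ᵥ x + v₁) v₂ x
    have h₃ := hMpsd.add_dotProduct_mulVec_le (A *ᵥ x + v₁ + v₂) c x
    linarith
  have hthreshold : 2 * S * r < lam * (x ⬝ᵥ M *ᵥ x) := by
    rw [div_mul_eq_mul_div, div_lt_iff₀ (by positivity)] at hV
    calc 2 * S * r < 1 / κ * r * (lam * κ) * r := mul_lt_mul_of_pos_right hV hr
      _ = lam * (r * r) := by field_simp
      _ = lam * (x ⬝ᵥ M *ᵥ x) := by rw [Real.mul_self_sqrt hq.le]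
  have hdecrease : (A *ᵥ x + v₁ + v₂ + c) ⬝ᵥ M *ᵥ x < 0 := by linarith
  exact mul_neg_of_pos_of_neg (by positivity) (div_neg_of_neg_of_pos hdecrease hr)

/-- Strict decrease of the simulation function above the class-K threshold: under the
per-mode hypotheses (`M` symmetric positive definite, `Aᵀ M + M A + Eᵀ W E + λ M ⪯ 0`,
`ω̇ = A ω + v₁ + v₂ + c`, `E ω(t) ≥ 0`, `ω(t) ≠ 0`), if
`V(ω(t)) > (2/(λκ))(√(v₁ᵀMv₁) + √(v₂ᵀMv₂) + √(cᵀMc))`, then the derivative of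
`t ↦ V(ω(t))` at `t` is strictly negative. -/
theorem stmt_11 {N b : ℕ} (M : Matrix (Fin N) (Fin N) ℝ) (hM : M.PosDef)
    (lam κ : ℝ) (hlam : 0 < lam) (hκ : 0 < κ)
    (A : Matrix (Fin N) (Fin N) ℝ) (E : Matrix (Fin b) (Fin N) ℝ)
    (W : Matrix (Fin b) (Fin b) ℝ) (hW : W.IsSymm) (hWpos : ∀ i j, 0 ≤ W i j)
    (hLMI : (-(Aᵀ * M + M * A + Eᵀ * W * E + lam • M)).PosSemidef)
    (ω : ℝ → Fin N → ℝ) (v₁ v₂ c : Fin N → ℝ) (t : ℝ)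
    (hω : HasDerivAt ω (A *ᵥ ω t + v₁ + v₂ + c) t)
    (hE : ∀ i, 0 ≤ (E *ᵥ ω t) i) (hne : ω t ≠ 0)
    (hV : (2 / (lam * κ)) * (Real.sqrt (v₁ ⬝ᵥ M *ᵥ v₁) + Real.sqrt (v₂ ⬝ᵥ M *ᵥ v₂)
        + Real.sqrt (c ⬝ᵥ M *ᵥ c))
      < (1 / κ) * Real.sqrt (ω t ⬝ᵥ M *ᵥ ω t)) :
    ∃ D : ℝ, HasDerivAt (fun s => (1 / κ) * Real.sqrt (ω s ⬝ᵥ M *ᵥ ω s)) D t ∧ D < 0 :=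
  stmt_11_general M hM lam κ hlam hκ A E W hWpos hLMI ω v₁ v₂ c t hω hE hne hV
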